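/- arXiv:1505.01417 — 2 statements merged into one kernel-verified Lean document; each statement's English description precedes it below -/
import Mathlib

section
/- A random variable $Z$ with values in $\mathbb{N}_0$ has a Poisson distribution with mean $\lambda>0$ if and only if for every bounded function $f:\mathbb{N}_0\to\mathbb{R}$ one has $\mathbb{E}[\lambda f(Z+1) - Z f(Z)] = 0$. -/
/-!
Write `p k = P(Z = k)`, so that `E[g Z] = ∑ p n g n`. Testing the Stein identity
`E[λ f(Z+1) - Z f(Z)] = 0` against the indicator of `k + 1` gives the recurrence
`λ p k = (k + 1) p (k + 1)`, whose solutions are `p 0 λ^k / k!`; total mass one forces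
`p 0 = e^{-λ}`. Conversely, the recurrence gives `λ p n f(n+1) = u (n+1)` with `u n = n p n f n`,
so `∑ p n (λ f(n+1) - n f n) = ∑ (u (n+1) - u n)` telescopes to `-u 0 = 0`.
-/

open MeasureTheory

open scoped Nat

def poissonSteinOp (lam : ℝ) (f : ℕ → ℝ) (n : ℕ) : ℝ := lam * f (n + 1) - n * f n

section Sequences

variable {lam : ℝ} {p : ℕ → ℝ}

theorem poisson_recurrence_iff :
    (∀ k : ℕ, lam * p k = (k + 1) * p (k + 1)) ↔ ∀ k, p k = p 0 * lam ^ k / k ! := by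
  constructor
  · intro hrec k
    induction k with
    | zero => simp
    | succ k ih =>
      have := hrec k
      rw [ih] at this
      rw [Nat.factorial_succ, Nat.cast_mul, Nat.cast_succ, pow_succ]
      field_simp at this ⊢
      linear_combination -this
  · intro hp k
    rw [hp k, hp (k + 1), Nat.factorial_succ, Nat.cast_mul, Nat.cast_succ, pow_succ]
    field_simp

theorem eq_poisson_of_recurrence (hrec : ∀ k : ℕ, lam * p k = (k + 1) * p (k + 1))
    (hsum : ∑' k, p k = 1) (k : ℕ) : p k = Real.exp (-lam) * lam ^ k / k ! := by
  have hp := poisson_recurrence_iff.mp hrec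
  have hp0 : p 0 * Real.exp lam = 1 := by
    rw [← hsum, Real.exp_eq_exp_ℝ, NormedSpace.exp_eq_tsum_div, ← tsum_mul_left]
    exact tsum_congr fun k => by rw [hp k, mul_div_assoc]
  rw [hp k, Real.exp_neg, eq_inv_of_mul_eq_one_left hp0]

theorem tsum_mul_poissonSteinOp_eq_zero (hp : Summable p)
    (hrec : ∀ k : ℕ, lam * p k = (k + 1) * p (k + 1)) {f : ℕ → ℝ} {C : ℝ}
    (hf : ∀ k, |f k| ≤ C) : ∑' n, p n * poissonSteinOp lam f n = 0 := by
  set u : ℕ → ℝ := fun n => n * p n * f n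
  have hshift : ∀ n, u (n + 1) = lam * p n * f (n + 1) := fun n => by
    simp only [u, Nat.cast_succ, hrec]
  have hu : Summable u := by
    rw [← summable_nat_add_iff 1]
    refine .of_norm_bounded (hp.abs.mul_left (|lam| * C)) fun n => ?_
    rw [hshift, Real.norm_eq_abs, abs_mul, abs_mul, mul_right_comm _ C]
    gcongr
    exact hf _
  calc ∑' n, p n * poissonSteinOp lam f n = ∑' n, (u (n + 1) - u n) := by
        congr 1 with n; rw [hshift]; simp only [poissonSteinOp, u]; ring
    _ = 0 := by
        rw [((summable_nat_add_iff 1).mpr hu).tsum_sub hu, hu.tsum_eq_zero_add]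
        simp [u]

theorem tsum_mul_poissonSteinOp_single (k : ℕ) :
    ∑' n, p n * poissonSteinOp lam (Pi.single (k + 1) 1) n = lam * p k - (k + 1) * p (k + 1) := by
  have hterm : (fun n => p n * poissonSteinOp lam (Pi.single (k + 1) 1) n) =
      Pi.single k (lam * p k) - Pi.single (k + 1) ((k + 1) * p (k + 1)) := by
    ext n
    rcases eq_or_ne n k with rfl | hk
    · simp [poissonSteinOp, mul_comm]
    rcases eq_or_ne n (k + 1) with rfl | hk'
    · simp [poissonSteinOp]; ring
    · simp [poissonSteinOp, hk, hk']
  rw [hterm]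
  exact ((hasSum_pi_single _ _).sub (hasSum_pi_single _ _)).tsum_eq

end Sequences

section Law

variable {Ω : Type*} [MeasurableSpace Ω] {μ : Measure Ω} {Z : Ω → ℕ}

theorem integral_comp_eq_tsum (hZ : Measurable Z) {g : ℕ → ℝ}
    (hg : Integrable (fun ω => g (Z ω)) μ) :
    ∫ ω, g (Z ω) ∂μ = ∑' n, μ.real {ω | Z ω = n} * g n := by
  have hgm : AEStronglyMeasurable g (μ.map Z) := measurable_from_nat.aestronglyMeasurable
  rw [← integral_map hZ.aemeasurable hgm,
    integral_countable ((integrable_map_measure hgm hZ.aemeasurable).mpr hg)]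
  simp only [map_measureReal_apply hZ (measurableSet_singleton _), smul_eq_mul]
  rfl

theorem tsum_measureReal_preimage_eq_one [IsProbabilityMeasure μ] (hZ : Measurable Z) :
    ∑' n, μ.real {ω | Z ω = n} = 1 := by
  simpa using (integral_comp_eq_tsum (μ := μ) hZ (g := fun _ => 1) (integrable_const 1)).symm

theorem integrable_poissonSteinOp_comp [IsFiniteMeasure μ] (hZ : Measurable Z)
    (hint : Integrable (fun ω => (Z ω : ℝ)) μ) (lam : ℝ) {f : ℕ → ℝ} {C : ℝ}
    (hf : ∀ k, |f k| ≤ C) : Integrable (fun ω => poissonSteinOp lam f (Z ω)) μ := by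
  refine .sub (.of_bound ?_ (|lam| * C) ?_) (.mono' (hint.const_mul C) ?_ ?_)
  · exact (measurable_from_nat (f := fun n => lam * f (n + 1))).comp hZ |>.aestronglyMeasurable
  · filter_upwards with ω
    rw [Real.norm_eq_abs, abs_mul]
    gcongr
    exact hf _
  · exact (measurable_from_nat (f := fun n : ℕ => n * f n)).comp hZ |>.aestronglyMeasurable
  · filter_upwards with ω
    rw [Real.norm_eq_abs, abs_mul, Nat.abs_cast, mul_comm C]
    gcongr
    exact hf _

end Law

/-- Chen's characterization of the Poisson distribution: an integrable `ℕ`-valued random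
variable `Z` is Poisson with mean `λ` iff `E[λ f(Z+1) - Z f(Z)] = 0` for every bounded
`f : ℕ → ℝ`. -/
theorem stmt_4 {Ω : Type*} [MeasurableSpace Ω] (μ : Measure Ω) [IsProbabilityMeasure μ]
    (Z : Ω → ℕ) (hZ : Measurable Z)
    (hint : Integrable (fun ω => (Z ω : ℝ)) μ)
    (lam : ℝ) (hlam : 0 < lam) :
    (∀ k : ℕ, μ {ω | Z ω = k}
        = ENNReal.ofReal (Real.exp (-lam) * lam ^ k / k.factorial))
      ↔ ∀ f : ℕ → ℝ, (∃ C, ∀ k, |f k| ≤ C) →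
          ∫ ω, (lam * f (Z ω + 1) - (Z ω : ℝ) * f (Z ω)) ∂μ = 0 := by
  set p : ℕ → ℝ := fun k => μ.real {ω | Z ω = k}
  have hstein : ∀ (f : ℕ → ℝ) (C : ℝ), (∀ k, |f k| ≤ C) →
      ∫ ω, poissonSteinOp lam f (Z ω) ∂μ = ∑' n, p n * poissonSteinOp lam f n :=
    fun f C hf => integral_comp_eq_tsum hZ (integrable_poissonSteinOp_comp hZ hint lam hf)
  constructor
  · rintro hpois f ⟨C, hf⟩
    have hp : ∀ k, p k = Real.exp (-lam) * lam ^ k / k ! := fun k => by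
      simp only [p, measureReal_def, hpois]
      exact ENNReal.toReal_ofReal (by positivity)
    have hrec := (poisson_recurrence_iff (p := p) (lam := lam)).mpr fun k => by
      rw [hp, hp 0]; simp
    have hsum : Summable p := by
      refine ((Real.summable_pow_div_factorial lam).mul_left (Real.exp (-lam))).congr fun k => ?_
      rw [hp, mul_div_assoc]
    exact (hstein f C hf).trans (tsum_mul_poissonSteinOp_eq_zero hsum hrec hf)
  · intro hf
    have hrec : ∀ k : ℕ, lam * p k = (k + 1) * p (k + 1) := fun k => by
      have hbdd : ∀ n, |(Pi.single (k + 1) 1 : ℕ → ℝ) n| ≤ 1 := fun n => by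
        rcases eq_or_ne n (k + 1) with rfl | hn <;> simp [*]
      rw [← sub_eq_zero, ← tsum_mul_poissonSteinOp_single, ← hstein _ 1 hbdd]
      exact hf _ ⟨1, hbdd⟩
    intro k
    rw [← ENNReal.ofReal_toReal (measure_ne_top μ _), ← measureReal_def,
      ← eq_poisson_of_recurrence hrec (tsum_measureReal_preimage_eq_one hZ) k]
end

section
/- Let $p,q\in(0,1)$ with $p+q=1$, let $X$ be a random variable with $P(X=1)=p$, $P(X=-1)=q$, and let $G,H$ be real random variables independent of $X$ with $H-G$ taking integer values and $G,H$ integer valued. Let $f:\mathbb{Z}\to\mathbb{R}$ be bounded with $\|\Delta^2 f\|_\infty<\infty$. Set $D:=\sqrt{pq}(H-G)$ and $F:=H\mathbf{1}_{\{X=1\}}+G\mathbf{1}_{\{X=-1\}}$. Then $\big|\sqrt{pq}\big(f(H)-f(G)-\Delta f(F)(H-G)\big)\big| \le \|\Delta^2 f\|_\infty\,\frac{1}{2\sqrt{pq}}\,D\,(D+\sqrt{pq}\,X)$ pointwise, where $\Delta f(k)=f(k+1)-f(k)$. -/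
/-!
A second-order discrete Taylor estimate: if `|Δ²f| ≤ C` then `Δf` is `C`-Lipschitz, and summing
increments gives `|f (a + m) - f a - m Δf(a)| ≤ (C / 2) m (m - 1)` for every integer `m`.
Expanding around `F`, which is `H` when `X = 1` and `G` when `X = -1`, turns this into
`|f H - f G - Δf(F) (H - G)| ≤ (C / 2) (H - G) (H - G + X)`, and multiplying by `√(pq) ≥ 0`
gives the claim (both sides vanish when `√(pq) = 0`).
-/

open fwdDiff MeasureTheory

section DiscreteTaylor

variable {C : ℝ}

lemma abs_sub_le_of_abs_fwdDiff_le {g : ℤ → ℝ} (hg : ∀ k, |Δ_[1] g k| ≤ C) (i : ℤ) (n : ℕ) :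
    |g (i + n) - g i| ≤ C * n := by
  induction n with
  | zero => simp
  | succ n ih =>
    have hstep : g (i + ↑(n + 1)) - g i = (g (i + n) - g i) + Δ_[1] g (i + n) := by
      simp only [fwdDiff]; push_cast; ring_nf
    calc |g (i + ↑(n + 1)) - g i| ≤ |g (i + n) - g i| + |Δ_[1] g (i + n)| :=
          hstep ▸ abs_add_le _ _
      _ ≤ C * n + C := add_le_add ih (hg _)
      _ = C * ↑(n + 1) := by push_cast; ring

variable {f : ℤ → ℝ}

lemma abs_sub_sub_mul_fwdDiff_le (hC : ∀ k, |Δ_[1] (Δ_[1] f) k| ≤ C) (a m : ℤ) :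
    |f (a + m) - f a - m * Δ_[1] f a| ≤ C / 2 * (m * (m - 1)) := by
  induction m using Int.induction_on with
  | zero => simp
  | succ i ih =>
    have hstep : f (a + (i + 1)) - f a - (i + 1 : ℤ) * Δ_[1] f a
        = (f (a + i) - f a - i * Δ_[1] f a) + (Δ_[1] f (a + i) - Δ_[1] f a) := by
      simp only [fwdDiff]; push_cast; ring_nf
    have hlip := abs_sub_le_of_abs_fwdDiff_le hC a i
    calc _ ≤ |f (a + i) - f a - i * Δ_[1] f a| + |Δ_[1] f (a + i) - Δ_[1] f a| :=
          hstep ▸ abs_add_le _ _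
      _ ≤ C / 2 * (i * (i - 1)) + C * i := add_le_add (by exact_mod_cast ih) hlip
      _ = _ := by push_cast; ring
  | pred i ih =>
    have hstep : f (a + (-i - 1)) - f a - (-i - 1 : ℤ) * Δ_[1] f a
        = (f (a + -i) - f a - (-i : ℤ) * Δ_[1] f a)
          + (Δ_[1] f (a - i - 1 + ↑(i + 1)) - Δ_[1] f (a - i - 1)) := by
      simp only [fwdDiff]; push_cast; ring_nf
    have hlip := abs_sub_le_of_abs_fwdDiff_le hC (a - i - 1) (i + 1)
    calc _ ≤ |f (a + -i) - f a - (-i : ℤ) * Δ_[1] f a|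
            + |Δ_[1] f (a - i - 1 + ↑(i + 1)) - Δ_[1] f (a - i - 1)| :=
          hstep ▸ abs_add_le _ _
      _ ≤ C / 2 * ((-i : ℤ) * ((-i : ℤ) - 1)) + C * ↑(i + 1) := add_le_add ih hlip
      _ = _ := by push_cast; ring

lemma abs_sub_sub_fwdDiff_ite_mul_le (hC : ∀ k, |Δ_[1] (Δ_[1] f) k| ≤ C) (a b x : ℤ)
    (hx : x = 1 ∨ x = -1) :
    |f b - f a - Δ_[1] f (if x = 1 then b else a) * (b - a)|
      ≤ C / 2 * (b - a) * (b - a + x) := by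
  rcases hx with rfl | rfl
  · calc _ = |f (b + (a - b)) - f b - ↑(a - b) * Δ_[1] f b| := by
          rw [← abs_neg]; push_cast; ring_nf
      _ ≤ C / 2 * (↑(a - b) * (↑(a - b) - 1)) := abs_sub_sub_mul_fwdDiff_le hC b (a - b)
      _ = _ := by push_cast; ring
  · calc _ = |f (a + (b - a)) - f a - ↑(b - a) * Δ_[1] f a| := by
          push_cast; ring_nf
      _ ≤ C / 2 * (↑(b - a) * (↑(b - a) - 1)) := abs_sub_sub_mul_fwdDiff_le hC a (b - a)
      _ = _ := by push_cast; ring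

end DiscreteTaylor

lemma mul_one_div_two_mul_mul_mul_add_mul {s : ℝ} (hs : 0 ≤ s) (C d x : ℝ) :
    C * (1 / (2 * s)) * (s * d) * (s * d + s * x) = s * (C / 2 * d * (d + x)) := by
  rcases hs.eq_or_lt with rfl | hs
  · simp
  · field_simp

theorem stmt_16_general {Ω : Type*}
    (p q : ℝ)
    (X : Ω → ℤ) (hX : ∀ ω, X ω = 1 ∨ X ω = -1)
    (G H : Ω → ℤ)
    (f : ℤ → ℝ)
    (C : ℝ) (hC : ∀ k : ℤ, |f (k + 2) - 2 * f (k + 1) + f k| ≤ C) :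
    ∀ ω,
      |Real.sqrt (p * q) * (f (H ω) - f (G ω)
          - (f ((if X ω = 1 then H ω else G ω) + 1)
              - f (if X ω = 1 then H ω else G ω)) * ((H ω : ℝ) - G ω))|
        ≤ C * (1 / (2 * Real.sqrt (p * q)))
            * (Real.sqrt (p * q) * ((H ω : ℝ) - G ω))
            * (Real.sqrt (p * q) * ((H ω : ℝ) - G ω) + Real.sqrt (p * q) * (X ω : ℝ)) := by
  intro ω
  have hC' : ∀ k, |Δ_[1] (Δ_[1] f) k| ≤ C := fun k => by
    convert hC k using 2
    simp only [fwdDiff]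
    ring_nf
  have hs := Real.sqrt_nonneg (p * q)
  rw [abs_mul, abs_of_nonneg hs, mul_one_div_two_mul_mul_mul_add_mul hs]
  exact mul_le_mul_of_nonneg_left
    (abs_sub_sub_fwdDiff_ite_mul_le hC' (G ω) (H ω) (X ω) (hX ω)) hs

/-- Pointwise error estimate in the discrete chain rule: with `D = √(pq)(H - G)` and
`F = H 1_{X=1} + G 1_{X=-1}`,
`|√(pq)(f(H) - f(G) - Δf(F)(H - G))| ≤ ‖Δ²f‖_∞ · (2√(pq))⁻¹ · D (D + √(pq) X)`. -/
theorem stmt_16 {Ω : Type*} [MeasurableSpace Ω] (μ : Measure Ω) [IsProbabilityMeasure μ]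
    (p q : ℝ) (hp : 0 < p) (hp1 : p < 1) (hq : q = 1 - p)
    (X : Ω → ℤ) (hX : ∀ ω, X ω = 1 ∨ X ω = -1) (hXmeas : Measurable X)
    (G H : Ω → ℤ) (hGHmeas : Measurable fun ω => (G ω, H ω))
    (hindep : ProbabilityTheory.IndepFun X (fun ω => (G ω, H ω)) μ)
    (f : ℤ → ℝ) (hbdd : ∃ M, ∀ k, |f k| ≤ M)
    (C : ℝ) (hC : ∀ k : ℤ, |f (k + 2) - 2 * f (k + 1) + f k| ≤ C) :
    ∀ ω,
      |Real.sqrt (p * q) * (f (H ω) - f (G ω)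
          - (f ((if X ω = 1 then H ω else G ω) + 1)
              - f (if X ω = 1 then H ω else G ω)) * ((H ω : ℝ) - G ω))|
        ≤ C * (1 / (2 * Real.sqrt (p * q)))
            * (Real.sqrt (p * q) * ((H ω : ℝ) - G ω))
            * (Real.sqrt (p * q) * ((H ω : ℝ) - G ω) + Real.sqrt (p * q) * (X ω : ℝ)) :=
  stmt_16_general p q X hX G H f C hC
end
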